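/- Let M : α ↦ M_α be a matroid flock on E, and let α, β ∈ ℤ^E. If M_α = M_β, then there is a walk γ^0, …, γ^k ∈ ℤ^E with γ^0 = α and γ^k = β such that M_{γ^t} = M_α for all t = 0, …, k, and for each t ∈ {1,…,k} there is a subset J_t ⊆ E with γ^t − γ^{t−1} = e_{J_t} or γ^t − γ^{t−1} = −e_{J_t}. -/

import Mathlib

/-!
Iterating (MF1) gives `M_x ／ K = M_{x + e_K} ＼ K` for every `K ⊆ E`, so raising `x` off a set
`I` can only destroy independence of `I`. Let `α ≤ β` with `M_α = M_β`, `J = {i | α_i < β_i}` and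
`γ = α + e_J`. Squeezing `α ≤ γ ≤ β` shows that `M_γ` and `M_α` agree off `J`, and comparing
`M_α ／ J = M_γ ＼ J` and `M_γ ／ J = M_{γ + e_J} ＼ J` with `M_β ／ J = M_{β + e_J} ＼ J` shows
that `J` is a separator of both matroids. On `J` they agree because `M_γ ／ Jᶜ` is
`M_{α + 𝟙} ＼ Jᶜ = M_α ＼ Jᶜ`. Hence `M_γ = M_α`, and repeating such steps walks from `α` up to
`β`. In general both `α` and `β` can walk up to `β + n𝟙`, which lies in their cell by (MF2).
-/

open Matroid Set

namespace FrobFlock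

variable {E : Type*}

/-- The local rank function of a matroid: the size of a largest independent subset of `X`. -/
noncomputable def rk (M : Matroid E) (X : Set E) : ℕ :=
  sSup {n | ∃ I, I ⊆ X ∧ M.Indep I ∧ I.ncard = n}

/-- Deletion of the set `D` from the matroid `M`. -/
def mdel (M : Matroid E) (D : Set E) : Matroid E := M ↾ (M.E \ D)

/-- Contraction of the set `C` in the matroid `M` (defined by duality). -/
def mcon (M : Matroid E) (C : Set E) : Matroid E := (mdel M✶ C)✶

/-- The 0/1 indicator vector of a set `I ⊆ E`. -/
noncomputable def eVec (I : Set E) : E → ℤ := I.indicator 1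

/-- `M : ℤ^E → Matroid E` is a matroid flock of rank `d` on `E`:
each `M α` is a matroid on ground set `E` of rank `d`, satisfying (MF1) and (MF2). -/
def IsMatroidFlock [Fintype E] (d : ℕ) (M : (E → ℤ) → Matroid E) : Prop :=
  (∀ α, (M α).E = Set.univ) ∧
  (∀ α, rk (M α) Set.univ = d) ∧
  (∀ α (i : E), mcon (M α) {i} = mdel (M (α + eVec {i})) {i}) ∧
  (∀ α, M α = M (α + 1))

/-- A matroid valuation `ν : binom(E,d) → ℤ ∪ {∞}`, encoded as a function on all finsets
which takes the value `⊤` outside `binom(E,d)`. -/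
def IsValuation [DecidableEq E] (d : ℕ) (ν : Finset E → WithTop ℤ) : Prop :=
  (∀ B : Finset E, B.card ≠ d → ν B = ⊤) ∧
  (∃ B : Finset E, B.card = d ∧ ν B ≠ ⊤) ∧
  (∀ B B' : Finset E, B.card = d → B'.card = d → ∀ i ∈ B \ B', ∃ j ∈ B' \ B,
      ν (insert j (B.erase i)) + ν (insert i (B'.erase j)) ≤ ν B + ν B')

/-- `B ∈ B^ν_α`: the set `B` attains the supremum `g^ν(α)`, i.e. `B` is a basis of `M^ν_α`. -/
def OptBasis (d : ℕ) (ν : Finset E → WithTop ℤ) (α : E → ℤ) (B : Finset E) : Prop :=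
  B.card = d ∧ ν B ≠ ⊤ ∧ ∀ B' : Finset E, B'.card = d →
    ((∑ i ∈ B', α i : ℤ) : WithTop ℤ) + ν B ≤ ((∑ i ∈ B, α i : ℤ) : WithTop ℤ) + ν B'

end FrobFlock

lemma Relation.ReflTransGen.exists_seq {α : Type*} {r : α → α → Prop} {a b : α}
    (h : Relation.ReflTransGen r a b) :
    ∃ (k : ℕ) (γ : ℕ → α), γ 0 = a ∧ γ k = b ∧
      ∀ t < k, r (γ t) (γ (t + 1)) := by
  induction h using Relation.ReflTransGen.head_induction_on with
  | refl => exact ⟨0, fun _ => b, rfl, rfl, fun _ h => absurd h (Nat.not_lt_zero _)⟩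
  | @head a c hac _ ih =>
    obtain ⟨k, γ, h0, hk, hγ⟩ := ih
    refine ⟨k + 1, fun | 0 => _ | t + 1 => γ t, rfl, hk, fun t ht => ?_⟩
    cases t with
    | zero => show r a (γ 0); rwa [h0]
    | succ t => exact hγ t (by omega)

namespace Matroid

variable {α : Type*} {M N : Matroid α} {I J K A : Set α}

lemma indep_iff_of_contract_eq_delete (h : M ／ J = M ＼ J) :
    M.Indep I ↔ M.Indep (I ∩ J) ∧ M.Indep (I \ J) := by
  refine ⟨fun hI => ⟨hI.subset inter_subset_left, hI.subset sdiff_subset⟩,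
    fun ⟨hIJ, hIJ'⟩ => ?_⟩
  obtain ⟨B, hB, hIB⟩ := hIJ.subset_isBasis'_of_subset inter_subset_right
  have hcon : (M ／ J).Indep (I \ J) := h ▸ hIJ'.indep_delete_of_disjoint disjoint_sdiff_left
  exact (hB.contract_indep_iff.1 hcon).1.subset
    ((sdiff_union_inter I J).symm.subset.trans (union_subset_union_right _ hIB))

lemma Indep.contract_indep_of_contract_eq_delete (hA : M.Indep A) (h : M ／ J = M ＼ J)
    (hAJ : A ⊆ J) (hKJ : Disjoint K J) : (M ／ K).Indep A := by
  obtain ⟨B, hB⟩ := M.exists_isBasis' K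
  have hBJ : Disjoint B J := hKJ.mono_left hB.subset
  have hAB : M.Indep (A ∪ B) := by
    rw [indep_iff_of_contract_eq_delete h, union_inter_distrib_right, hBJ.inter_eq,
      inter_eq_left.2 hAJ, union_empty, union_sdiff_distrib, sdiff_eq_empty.2 hAJ,
      empty_union, hBJ.sdiff_eq_left]
    exact ⟨hA, hB.indep⟩
  exact hB.contract_indep_iff.2 ⟨hAB, hKJ.symm.mono_left hAJ |>.symm⟩

lemma ext_of_contract_eq_delete (hE : M.E = N.E) (hM : M ／ J = M ＼ J) (hN : N ／ J = N ＼ J)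
    (hdel : M ＼ J = N ＼ J) (hJ : ∀ A ⊆ J, M.Indep A ↔ N.Indep A) : M = N := by
  refine ext_indep hE fun I _ => ?_
  rw [indep_iff_of_contract_eq_delete hM, indep_iff_of_contract_eq_delete hN,
    hJ _ inter_subset_right, indep_iff_delete_of_disjoint disjoint_sdiff_left,
    indep_iff_delete_of_disjoint (M := N) disjoint_sdiff_left, hdel]

end Matroid

namespace FrobFlock

variable {E : Type*}

lemma eVec_apply (J : Set E) (i : E) [Decidable (i ∈ J)] :
    eVec J i = if i ∈ J then 1 else 0 := by
  simp [eVec, indicator_apply]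

@[simp] lemma eVec_empty : eVec (∅ : Set E) = 0 := indicator_empty' 1

lemma eVec_insert {K : Set E} {i : E} (hi : i ∉ K) : eVec (insert i K) = eVec K + eVec {i} := by
  rw [← union_singleton, eVec, eVec, eVec, indicator_union_of_disjoint (by simpa using hi)]
  rfl

lemma eVec_add_eVec_compl (J : Set E) : eVec J + eVec Jᶜ = 1 := by
  classical
  ext i
  by_cases hi : i ∈ J <;> simp [eVec_apply, hi]

lemma exists_forall_le_natCast [Finite E] (f : E → ℤ) : ∃ n : ℕ, ∀ i, f i ≤ n := by
  obtain ⟨m, hm⟩ := Finite.exists_le f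
  exact ⟨m.toNat, fun i => (hm i).trans (Int.self_le_toNat m)⟩

lemma add_eVec_lt_apply (a b : E → ℤ) (i : E) :
    (a + eVec {j | a j < b j}) i = if a i < b i then a i + 1 else a i := by
  simp only [Pi.add_apply, eVec_apply, mem_ofPred_eq]
  split_ifs <;> ring

lemma le_induction_add_eVec [Finite E] {b : E → ℤ} {P : (E → ℤ) → Prop} (hb : P b)
    (step : ∀ a ≤ b, P (a + eVec {i | a i < b i}) → P a) {a : E → ℤ} (hab : a ≤ b) :
    P a := by
  obtain ⟨n, hn⟩ := exists_forall_le_natCast (b - a)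
  induction n generalizing a with
  | zero =>
    obtain rfl : a = b := le_antisymm hab fun i => show b i ≤ a i by
      have := hn i
      simp only [Pi.sub_apply, Nat.cast_zero] at this
      omega
    exact hb
  | succ n ih =>
    refine step a hab (ih (fun i => ?_) fun i => ?_)
    · have : a i ≤ b i := hab i
      show _ ≤ b i
      rw [add_eVec_lt_apply]; split_ifs <;> omega
    · have : b i - a i ≤ n + 1 := by exact_mod_cast hn i
      rw [Pi.sub_apply, add_eVec_lt_apply]; split_ifs <;> omega

section Flock

variable [Fintype E] {d : ℕ} {M : (E → ℤ) → Matroid E}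

namespace IsMatroidFlock

lemma ground (hM : IsMatroidFlock d M) (x : E → ℤ) : (M x).E = univ := hM.1 x

lemma contract_singleton (hM : IsMatroidFlock d M) (x : E → ℤ) (i : E) :
    M x ／ {i} = M (x + eVec {i}) ＼ {i} :=
  hM.2.2.1 x i

lemma add_one (hM : IsMatroidFlock d M) (x : E → ℤ) : M (x + 1) = M x := (hM.2.2.2 x).symm

lemma add_natCast (hM : IsMatroidFlock d M) (x : E → ℤ) (n : ℕ) : M (x + n) = M x := by
  induction n with
  | zero => simp
  | succ n ih => rw [Nat.cast_succ, ← add_assoc, hM.add_one, ih]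

lemma contract_eq_delete_add_eVec (hM : IsMatroidFlock d M) (x : E → ℤ) (K : Set E) :
    M x ／ K = M (x + eVec K) ＼ K := by
  induction K, K.toFinite using Set.Finite.induction_on generalizing x with
  | empty => rw [eVec_empty, add_zero, contract_empty, delete_empty]
  | @insert i K hiK _ ih =>
    rw [← union_singleton, ← contract_contract, ih,
      ← contract_delete_comm _ (disjoint_singleton_left.2 hiK), hM.contract_singleton,
      delete_delete, singleton_union, union_singleton, eVec_insert hiK, add_assoc]

lemma indep_of_indep_add_eVec (hM : IsMatroidFlock d M) {x : E → ℤ} {I K : Set E}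
    (hIK : Disjoint I K) (hI : (M (x + eVec K)).Indep I) : (M x).Indep I := by
  have hcon : (M x ／ K).Indep I := by
    rw [hM.contract_eq_delete_add_eVec]
    exact hI.indep_delete_of_disjoint hIK
  exact hcon.of_contract

lemma indep_of_le (hM : IsMatroidFlock d M) {x y : E → ℤ} {I : Set E} (hxy : x ≤ y)
    (hIxy : ∀ i ∈ I, x i = y i) (hI : (M y).Indep I) : (M x).Indep I := by
  refine le_induction_add_eVec (P := fun x => (∀ i ∈ I, x i = y i) → (M x).Indep I)
    (fun _ => hI) (fun a _ ih hIay => ?_) hxy hIxy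
  have hIK : Disjoint I {i | a i < y i} :=
    disjoint_left.2 fun i hi hlt => (show a i < y i from hlt).ne (hIay i hi)
  refine hM.indep_of_indep_add_eVec hIK (ih fun i hi => ?_)
  rw [add_eVec_lt_apply, hIay i hi, if_neg (lt_irrefl _)]

lemma delete_eq_of_le_of_le (hM : IsMatroidFlock d M) {x y z : E → ℤ} {J : Set E}
    (hxz : M x = M z) (hxy : x ≤ y) (hyz : y ≤ z) (hJ : ∀ i ∉ J, x i = z i) :
    M y ＼ J = M x ＼ J := by
  refine ext_indep (by rw [delete_ground, delete_ground, hM.ground, hM.ground]) fun I hI => ?_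
  have hIJ : ∀ i ∈ I, i ∉ J := fun i hi => disjoint_left.1 (subset_sdiff.1 hI).2 hi
  have hxy_eq : ∀ i ∈ I, x i = y i := fun i hi =>
    le_antisymm (hxy i) ((hyz i).trans (hJ i (hIJ i hi)).ge)
  have hyz_eq : ∀ i ∈ I, y i = z i := fun i hi => (hxy_eq i hi).symm.trans (hJ i (hIJ i hi))
  simp only [delete_indep_iff]
  exact and_congr_left fun _ =>
    ⟨hM.indep_of_le hxy hxy_eq, fun h => hM.indep_of_le hyz hyz_eq (hxz ▸ h)⟩

lemma contract_eq_delete_of_le (hM : IsMatroidFlock d M) {y z : E → ℤ} {J : Set E}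
    (hyz : y ≤ z) (hJ : ∀ i ∉ J, y i = z i) (h : M y ＼ J = M z ／ J) :
    M y ／ J = M y ＼ J := by
  refine ext_indep rfl fun I hI => ⟨fun hI' => hI'.of_contract.indep_delete_of_disjoint
    (subset_sdiff.1 hI).2, fun hI' => ?_⟩
  have hIJ : Disjoint I J := (subset_sdiff.1 hI).2
  rw [h, hM.contract_eq_delete_add_eVec] at hI'
  rw [hM.contract_eq_delete_add_eVec]
  refine (hM.indep_of_le (add_le_add_left hyz _) (fun i hi => ?_) hI'.of_delete)
    |>.indep_delete_of_disjoint hIJ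
  rw [Pi.add_apply, Pi.add_apply, hJ i (disjoint_left.1 hIJ hi)]

lemma add_eVec_eq_of_le (hM : IsMatroidFlock d M) {α β : E → ℤ} (hαβ : M α = M β)
    (hle : α ≤ β) : M (α + eVec {i | α i < β i}) = M α := by
  set J : Set E := {i | α i < β i}
  set γ := α + eVec J
  have hγ : ∀ i, γ i = if α i < β i then α i + 1 else α i := add_eVec_lt_apply α β
  have hαγ : α ≤ γ := fun i => show α i ≤ γ i by rw [hγ]; split_ifs <;> omega
  have hγβ : γ ≤ β := fun i => show γ i ≤ β i by
    have : α i ≤ β i := hle i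
    rw [hγ]; split_ifs <;> omega
  have hoff : ∀ i ∉ J, α i = β i := fun i hi => le_antisymm (hle i) (not_lt.1 hi)
  have hdel : M γ ＼ J = M α ＼ J := hM.delete_eq_of_le_of_le hαβ hαγ hγβ hoff
  have hsepα : M α ／ J = M α ＼ J := by rw [hM.contract_eq_delete_add_eVec, hdel]
  have hγβ_off : ∀ i ∉ J, γ i = β i := fun i hi => by
    rw [hγ, if_neg (show ¬α i < β i from hi), hoff i hi]
  have hsepγ : M γ ／ J = M γ ＼ J :=
    hM.contract_eq_delete_of_le hγβ hγβ_off (by rw [hdel, ← hsepα, hαβ])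
  have hγ_compl : γ + eVec Jᶜ = α + 1 := by rw [add_assoc, eVec_add_eVec_compl]
  refine ext_of_contract_eq_delete (by rw [hM.ground, hM.ground]) hsepγ hsepα hdel
    fun A hAJ => ⟨fun hA => ?_, fun hA => ?_⟩
  · have hcon := hA.contract_indep_of_contract_eq_delete hsepγ hAJ (K := Jᶜ) disjoint_compl_left
    rw [hM.contract_eq_delete_add_eVec, hγ_compl, hM.add_one] at hcon
    exact hcon.of_delete
  · rw [← hM.add_one, ← hγ_compl] at hA
    exact hM.indep_of_indep_add_eVec (disjoint_compl_right.mono_left hAJ) hA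

end IsMatroidFlock

def CellStep (M : (E → ℤ) → Matroid E) (a b : E → ℤ) : Prop :=
  M a = M b ∧ ∃ J : Set E, b - a = eVec J ∨ b - a = -eVec J

instance : Std.Symm (CellStep M) where
  symm _ _ := fun ⟨hab, J, hJ⟩ =>
    ⟨hab.symm, J, by rw [← neg_sub, neg_inj, neg_eq_iff_eq_neg]; tauto⟩

namespace IsMatroidFlock

lemma reflTransGen_cellStep_of_le (hM : IsMatroidFlock d M) {a b : E → ℤ} (hab : M a = M b)
    (hle : a ≤ b) : Relation.ReflTransGen (CellStep M) a b := by
  refine le_induction_add_eVec (P := fun a => M a = M b → Relation.ReflTransGen (CellStep M) a b)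
    (fun _ => .refl) (fun a hle ih hab => ?_) hle hab
  have hstep := hM.add_eVec_eq_of_le hab hle
  exact .head ⟨hstep.symm, _, Or.inl (add_sub_cancel_left _ _)⟩ (ih (hstep.trans hab))

lemma reflTransGen_cellStep (hM : IsMatroidFlock d M) {a b : E → ℤ} (hab : M a = M b) :
    Relation.ReflTransGen (CellStep M) a b := by
  obtain ⟨n, hn⟩ := exists_forall_le_natCast (a - b)
  have hc : M (b + n) = M b := hM.add_natCast b n
  have hac : a ≤ b + n := fun i => by
    have : a i - b i ≤ n := hn i
    show a i ≤ b i + n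
    omega
  have hbc : b ≤ b + n := le_add_of_nonneg_right (fun _ => by simp)
  exact (hM.reflTransGen_cellStep_of_le (hab.trans hc.symm) hac).trans
    (Std.Symm.symm _ _ (hM.reflTransGen_cellStep_of_le hc.symm hbc))

end IsMatroidFlock

end Flock

/-- **Lemma.** Let `M : α ↦ M_α` be a matroid flock on `E` and let `α, β ∈ ℤ^E`.
If `M_α = M_β`, then there is a walk `γ^0, …, γ^k ∈ ℤ^E` from `α = γ^0` to `β = γ^k`
such that `M_{γ^t} = M_α` for `t = 0, …, k`, and for each `t` there is a set `J_t ⊆ E`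
with `γ^t − γ^{t−1} = ± e_{J_t}`. -/
theorem flock_cell_walk [Fintype E] (d : ℕ) (M : (E → ℤ) → Matroid E)
    (hM : IsMatroidFlock d M) (α β : E → ℤ) (hαβ : M α = M β) :
    ∃ (k : ℕ) (γ : ℕ → E → ℤ), γ 0 = α ∧ γ k = β ∧
      (∀ t ≤ k, M (γ t) = M α) ∧
      (∀ t, 1 ≤ t → t ≤ k → ∃ J : Set E,
        γ t - γ (t - 1) = eVec J ∨ γ t - γ (t - 1) = -eVec J) := by
  obtain ⟨k, γ, h0, hk, hstep⟩ := (hM.reflTransGen_cellStep hαβ).exists_seq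
  have hcell : ∀ t ≤ k, M (γ t) = M α := by
    intro t ht
    induction t with
    | zero => rw [h0]
    | succ t ih => rw [← (hstep t ht).1, ih (by omega)]
  refine ⟨k, γ, h0, hk, hcell, fun t ht hkt => ?_⟩
  obtain ⟨t, rfl⟩ := Nat.exists_eq_add_of_le' ht
  exact (hstep t hkt).2

end FrobFlock
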